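/- There exists ε* ∈ (0,1) such that for every ε₀ ∈ (0, ε*) there are constants 0 < C₁ ≤ C₂, depending only on ε₀ and n, with the following property: for every nonempty closed set L ⊊ S and every x ∈ Ω = S \ L, one has C₁·dist(x,L) ≤ 1 − f(x) ≤ C₂·dist(x,L). (Proposition 1.1, estimate (1.4): the height of the invariant graph G above x is comparable to the distance of x to the limit set.) -/

import Mathlib

/-- The dome `H(w,r)`: the intersection of the open unit ball with the open ball
centered at `(cos θ)⁻¹ • w` of radius `tan θ`, where `cos θ = 1 − r²/2`; its boundary
sphere meets the unit sphere orthogonally along `∂Cap(w,r)` (the hyperbolic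
half-space over the cap `Cap(w,r)` in the ball model). -/
noncomputable def dome (n : ℕ) (w : EuclideanSpace ℝ (Fin (n + 1))) (r : ℝ) :
    Set (EuclideanSpace ℝ (Fin (n + 1))) :=
  Metric.ball 0 1 ∩
    Metric.ball ((1 - r ^ 2 / 2)⁻¹ • w)
      (Real.sqrt (1 - (1 - r ^ 2 / 2) ^ 2) / (1 - r ^ 2 / 2))

/-- The union `⋃_{w ∈ Ω} H_w` of the domes over the caps `B_w = Cap(w, ε₀·dist(w,L))`,
`w ∈ Ω = S \ L`. -/
noncomputable def domeUnion (n : ℕ) (L : Set (EuclideanSpace ℝ (Fin (n + 1)))) (ε₀ : ℝ) :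
    Set (EuclideanSpace ℝ (Fin (n + 1))) :=
  ⋃ w ∈ Metric.sphere (0 : EuclideanSpace ℝ (Fin (n + 1))) 1 \ L,
    dome n w (ε₀ * Metric.infDist w L)

/-- The graph function `f : Ω → (0,1]`,
`f(x) = inf({1} ∪ {t ∈ (0,1) : t•x ∈ ⋃_{w∈Ω} H_w})`; the invariant graph is
`G = {f(x)•x : x ∈ Ω} = ∂(⋃_{w∈Ω} H_w) ∩ B^{n+1}`. -/
noncomputable def graphHeight (n : ℕ) (L : Set (EuclideanSpace ℝ (Fin (n + 1))))
    (ε₀ : ℝ) (x : EuclideanSpace ℝ (Fin (n + 1))) : ℝ :=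
  sInf ({1} ∪ {t : ℝ | t ∈ Set.Ioo (0 : ℝ) 1 ∧ t • x ∈ domeUnion n L ε₀})

/-! A point `z` lies in the dome over `Cap(w, r)` iff `‖z‖ < 1` and
`(1 - r²/2)(‖z‖² + 1) < 2⟪z, w⟫`. On the ray through `x`, the dome over `x` itself reaches
down to `(1 - r/2)•x` with `r = ε₀·dist(x,L)`, so `1 - f(x) ≥ ε₀·dist(x,L)/2`. Conversely, if
`t•x` lies in the dome over `w`, with radius `r_w = ε₀·dist(w,L)`, then `‖x - w‖ < r_w` and
`1 - t < r_w`; the first forces `dist(w,L) < 2·dist(x,L)` once `ε₀ ≤ 1/2`, hence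
`1 - f(x) ≤ 2ε₀·dist(x,L)`. -/

open Metric
open scoped InnerProductSpace

lemma mem_ball_inv_smul_iff {E : Type*} [NormedAddCommGroup E] [InnerProductSpace ℝ E]
    {w z : E} {a : ℝ} (hw : ‖w‖ = 1) (ha : 0 < a) :
    z ∈ ball (a⁻¹ • w) (√(1 - a ^ 2) / a) ↔ a * (‖z‖ ^ 2 + 1) < 2 * ⟪z, w⟫_ℝ := by
  have hscale : a • (z - a⁻¹ • w) = a • z - w := by
    rw [smul_sub, smul_smul, mul_inv_cancel₀ ha.ne', one_smul]
  have hexpand : ‖a • z - w‖ ^ 2 = a ^ 2 * ‖z‖ ^ 2 - 2 * a * ⟪z, w⟫_ℝ + 1 := by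
    rw [norm_sub_sq_real, norm_smul, real_inner_smul_left, hw, Real.norm_of_nonneg ha.le]
    ring
  have hnorm : ‖z - a⁻¹ • w‖ * a = ‖a • z - w‖ := by
    rw [← hscale, norm_smul, Real.norm_of_nonneg ha.le, mul_comm]
  rw [mem_ball, dist_eq_norm, lt_div_iff₀ ha, hnorm, Real.lt_sqrt (norm_nonneg _), hexpand]
  constructor <;> intro h <;> nlinarith

lemma mem_dome_iff {n : ℕ} {w z : EuclideanSpace ℝ (Fin (n + 1))} {r : ℝ} (hw : ‖w‖ = 1)
    (hr : r ^ 2 < 2) :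
    z ∈ dome n w r ↔ ‖z‖ < 1 ∧ (1 - r ^ 2 / 2) * (‖z‖ ^ 2 + 1) < 2 * ⟪z, w⟫_ℝ := by
  rw [dome, Set.mem_inter_iff, mem_ball_zero_iff,
    mem_ball_inv_smul_iff hw (by linarith)]

lemma smul_mem_dome_iff {n : ℕ} {x w : EuclideanSpace ℝ (Fin (n + 1))} {r t : ℝ} (hx : ‖x‖ = 1)
    (hw : ‖w‖ = 1) (hr : r ^ 2 < 2) (ht : 0 < t) :
    t • x ∈ dome n w r ↔ t < 1 ∧ (1 - r ^ 2 / 2) * (t ^ 2 + 1) < 2 * t * ⟪x, w⟫_ℝ := by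
  rw [mem_dome_iff hw hr, norm_smul, hx, mul_one, Real.norm_of_nonneg ht.le,
    real_inner_smul_left, mul_assoc]

lemma one_sub_half_smul_mem_dome_self {n : ℕ} {x : EuclideanSpace ℝ (Fin (n + 1))} {r : ℝ}
    (hx : ‖x‖ = 1) (hr0 : 0 < r) (hr : r ^ 2 < 2) : (1 - r / 2) • x ∈ dome n x r := by
  have hr2 : r < 2 := by nlinarith
  rw [smul_mem_dome_iff hx hx hr (by linarith), real_inner_self_eq_norm_sq, hx]
  refine ⟨by linarith, ?_⟩
  nlinarith [sq_nonneg (r - 1), mul_pos hr0 hr0]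

lemma norm_sub_lt_of_smul_mem_dome {n : ℕ} {x w : EuclideanSpace ℝ (Fin (n + 1))} {r t : ℝ}
    (hx : ‖x‖ = 1) (hw : ‖w‖ = 1) (hr0 : 0 ≤ r) (hr : r ^ 2 < 2) (ht : 0 < t)
    (h : t • x ∈ dome n w r) : ‖x - w‖ < r := by
  obtain ⟨-, hmem⟩ := (smul_mem_dome_iff hx hw hr ht).1 h
  have hinner : 1 - r ^ 2 / 2 < ⟪x, w⟫_ℝ := by nlinarith [sq_nonneg (t - 1)]
  refine lt_of_pow_lt_pow_left₀ 2 hr0 ?_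
  rw [norm_sub_sq_real, hx, hw]
  linarith

lemma one_sub_lt_of_smul_mem_dome {n : ℕ} {x w : EuclideanSpace ℝ (Fin (n + 1))} {r t : ℝ}
    (hx : ‖x‖ = 1) (hw : ‖w‖ = 1) (hr0 : 0 ≤ r) (hr : r ^ 2 < 2) (ht : 0 < t)
    (h : t • x ∈ dome n w r) : 1 - t < r := by
  obtain ⟨ht1, hmem⟩ := (smul_mem_dome_iff hx hw hr ht).1 h
  have hinner : ⟪x, w⟫_ℝ ≤ 1 := by simpa [hx, hw] using real_inner_le_norm x w
  have hsub : (1 - r ^ 2 / 2) * (t ^ 2 + 1) < 2 * t := by nlinarith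
  refine lt_of_pow_lt_pow_left₀ 2 hr0 ?_
  nlinarith [mul_nonneg (sq_nonneg r) (by nlinarith : (0 : ℝ) ≤ 1 - t ^ 2)]

lemma infDist_le_two_of_subset_sphere {E : Type*} [NormedAddCommGroup E] {x : E} {L : Set E}
    (hx : ‖x‖ = 1) (hL : L ⊆ sphere 0 1) (hne : L.Nonempty) : infDist x L ≤ 2 := by
  obtain ⟨l, hl⟩ := hne
  calc infDist x L ≤ dist x l := infDist_le_dist_of_mem hl
    _ ≤ ‖x‖ + ‖l‖ := by rw [dist_eq_norm]; exact norm_sub_le x l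
    _ = 2 := by rw [hx, mem_sphere_zero_iff_norm.1 (hL hl)]; norm_num

lemma infDist_lt_two_mul_of_dist_lt {α : Type*} [PseudoMetricSpace α] {x w : α} {s : Set α}
    {ε : ℝ} (hε : ε ≤ 1 / 2) (h : dist x w < ε * infDist w s) :
    infDist w s < 2 * infDist x s := by
  have := infDist_le_infDist_add_dist (x := w) (y := x) (s := s)
  rw [dist_comm] at this
  nlinarith [infDist_nonneg (x := w) (s := s)]

section graphHeight

variable {n : ℕ} {L : Set (EuclideanSpace ℝ (Fin (n + 1)))} {ε₀ : ℝ}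
  {x : EuclideanSpace ℝ (Fin (n + 1))}

lemma mul_infDist_le_one (hε₀ : ε₀ ∈ Set.Ioc 0 (1 / 2)) (hne : L.Nonempty)
    (hL : L ⊆ sphere 0 1) (hx : ‖x‖ = 1) : ε₀ * infDist x L ≤ 1 :=
  calc ε₀ * infDist x L ≤ 1 / 2 * 2 :=
        mul_le_mul hε₀.2 (infDist_le_two_of_subset_sphere hx hL hne) infDist_nonneg (by norm_num)
    _ = 1 := by norm_num

lemma graphHeight_le {t : ℝ} (ht : t ∈ Set.Ioo 0 1) (hmem : t • x ∈ domeUnion n L ε₀) :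
    graphHeight n L ε₀ x ≤ t := by
  refine csInf_le ⟨0, ?_⟩ (Or.inr ⟨ht, hmem⟩)
  rintro s (rfl | ⟨hs, -⟩)
  exacts [zero_le_one, hs.1.le]

lemma le_graphHeight {c : ℝ} (hc : c ≤ 1)
    (h : ∀ t ∈ Set.Ioo (0 : ℝ) 1, t • x ∈ domeUnion n L ε₀ → c ≤ t) :
    c ≤ graphHeight n L ε₀ x := by
  refine le_csInf ⟨1, Or.inl rfl⟩ ?_
  rintro s (rfl | ⟨hs, hmem⟩)
  exacts [hc, h s hs hmem]

lemma graphHeight_le_one_sub_half_mul_infDist (hε₀ : ε₀ ∈ Set.Ioc 0 (1 / 2))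
    (hne : L.Nonempty) (hcl : IsClosed L) (hL : L ⊆ sphere 0 1) (hx : x ∈ sphere 0 1 \ L) :
    graphHeight n L ε₀ x ≤ 1 - ε₀ * infDist x L / 2 := by
  have hx1 : ‖x‖ = 1 := mem_sphere_zero_iff_norm.1 hx.1
  have hd0 : 0 < infDist x L := (hcl.notMem_iff_infDist_pos hne).1 hx.2
  have hr0 : 0 < ε₀ * infDist x L := mul_pos hε₀.1 hd0
  have hr1 := mul_infDist_le_one hε₀ hne hL hx1
  refine graphHeight_le ⟨by linarith, by linarith⟩ (Set.mem_biUnion hx ?_)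
  exact one_sub_half_smul_mem_dome_self hx1 hr0 (by nlinarith)

lemma one_sub_two_mul_infDist_le_graphHeight (hε₀ : ε₀ ∈ Set.Ioc 0 (1 / 2))
    (hne : L.Nonempty) (hL : L ⊆ sphere 0 1) (hx : ‖x‖ = 1) :
    1 - 2 * ε₀ * infDist x L ≤ graphHeight n L ε₀ x := by
  have hd0 : 0 ≤ infDist x L := infDist_nonneg
  refine le_graphHeight (by nlinarith [hε₀.1]) fun t ht hmem => ?_
  obtain ⟨w, hw, htw⟩ := Set.mem_iUnion₂.1 hmem
  have hw1 : ‖w‖ = 1 := mem_sphere_zero_iff_norm.1 hw.1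
  have hr0 : 0 ≤ ε₀ * infDist w L := mul_nonneg hε₀.1.le infDist_nonneg
  have hr1 := mul_infDist_le_one hε₀ hne hL hw1
  have hr2 : (ε₀ * infDist w L) ^ 2 < 2 := by nlinarith
  have hheight := one_sub_lt_of_smul_mem_dome hx hw1 hr0 hr2 ht.1 htw
  have hclose : dist x w < ε₀ * infDist w L := by
    rw [dist_eq_norm]; exact norm_sub_lt_of_smul_mem_dome hx hw1 hr0 hr2 ht.1 htw
  have hdw := mul_lt_mul_of_pos_left (infDist_lt_two_mul_of_dist_lt hε₀.2 hclose) hε₀.1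
  linarith

end graphHeight

theorem graph_height_comparable (n : ℕ) :
    ∃ εstar ∈ Set.Ioo (0 : ℝ) 1, ∀ ε₀ ∈ Set.Ioo (0 : ℝ) εstar,
      ∃ C₁ C₂ : ℝ, 0 < C₁ ∧ C₁ ≤ C₂ ∧
        ∀ L : Set (EuclideanSpace ℝ (Fin (n + 1))),
          L.Nonempty → IsClosed L →
          L ⊆ Metric.sphere (0 : EuclideanSpace ℝ (Fin (n + 1))) 1 →
          L ≠ Metric.sphere (0 : EuclideanSpace ℝ (Fin (n + 1))) 1 →
          ∀ x ∈ Metric.sphere (0 : EuclideanSpace ℝ (Fin (n + 1))) 1 \ L,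
            C₁ * Metric.infDist x L ≤ 1 - graphHeight n L ε₀ x ∧
            1 - graphHeight n L ε₀ x ≤ C₂ * Metric.infDist x L := by
  refine ⟨1 / 2, ⟨by norm_num, by norm_num⟩, fun ε₀ hε₀ => ?_⟩
  have hε₀' : ε₀ ∈ Set.Ioc 0 (1 / 2) := ⟨hε₀.1, hε₀.2.le⟩
  refine ⟨ε₀ / 2, 2 * ε₀, by linarith [hε₀.1], by linarith [hε₀.1], ?_⟩
  intro L hne hcl hL _ x hx
  have hupper := graphHeight_le_one_sub_half_mul_infDist hε₀' hne hcl hL hx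
  have hlower := one_sub_two_mul_infDist_le_graphHeight hε₀' hne hL
    (mem_sphere_zero_iff_norm.1 hx.1)
  constructor <;> linarith
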